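/- Let f be a piecewise polynomial function on a box Ω₀ ⊂ ℝⁿ of the form f(x) = Σ_{k=1}^K P_k(x)·1_{B_k}(x), where the B_k ⊂ Ω₀ are pairwise disjoint axis-aligned boxes and each P_k is a polynomial of total degree at most r−1. Then there exists an adaptive tree partition 𝒯 of Ω₀ (using axis-aligned hyperplane splits) such that f belongs to the Besov-type space B_τ^{α,r}(𝒯) for every α > 0. -/

import Mathlib

open MeasureTheory
open scoped ENNReal

/-- The `r`-th order difference `Δ_h^r(f, Ω, x)`, set to `0` when `[x, x+rh] ⊄ Ω`. -/
noncomputable def rDiff {n : ℕ} (r : ℕ) (f : EuclideanSpace ℝ (Fin n) → ℝ)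
    (Ω : Set (EuclideanSpace ℝ (Fin n))) (h x : EuclideanSpace ℝ (Fin n)) : ℝ :=
  Set.indicator {y | segment ℝ y (y + (r : ℝ) • h) ⊆ Ω}
    (fun y => ∑ k ∈ Finset.range (r + 1),
      (-1 : ℝ) ^ (r + k) * (r.choose k : ℝ) * f (y + (k : ℝ) • h)) x

/-- The modulus of smoothness `ω_r(f, Ω)_τ = sup_{|h| ≤ diam(Ω)/r} ‖Δ_h^r(f, Ω, ·)‖_{L_τ(Ω)}`. -/
noncomputable def modulusR {n : ℕ} (r : ℕ) (f : EuclideanSpace ℝ (Fin n) → ℝ)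
    (Ω : Set (EuclideanSpace ℝ (Fin n))) (τ : ℝ) : ℝ≥0∞ :=
  ⨆ (h : EuclideanSpace ℝ (Fin n)) (_ : ‖h‖ ≤ Metric.diam Ω / r),
    eLpNorm (fun x => rDiff r f Ω h x) (ENNReal.ofReal τ) (volume.restrict Ω)

/-- The `τ`-th power of the Besov-type semi-norm
`|f|_{B_τ^{α,r}(𝒯)} = (Σ_{Ω ∈ 𝒯} (|Ω|^{-α} ω_r(f,Ω)_τ)^τ)^{1/τ}` of a tree `𝒯`
whose node `(l, j)` is the `j`-th cell at level `l`. -/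
noncomputable def besovTreeSeminormTau {n : ℕ} (r : ℕ) (α τ : ℝ)
    (f : EuclideanSpace ℝ (Fin n) → ℝ)
    (cells : ℕ → ℕ → Set (EuclideanSpace ℝ (Fin n))) : ℝ≥0∞ :=
  ∑' (l : ℕ) (j : ℕ), (volume (cells l j) ^ (-α) * modulusR r f (cells l j) τ) ^ τ

/-! Cut the root box successively along every hyperplane `x i = lo k i`, `x i = hi k i` that
carries a face of one of the boxes `B k`. Past these finitely many levels every cell lies on one
side of each such hyperplane, so off a null set it is either contained in `B k` or disjoint from
it. On such a cell `f` agrees a.e. with a single polynomial of degree `< r`; its `r`-th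
differences vanish (restricted to a line it is a univariate polynomial of degree `< r`), hence so
does the modulus of smoothness. The Besov sum thus has finitely many nonzero terms, each finite
because `f` is bounded and the cells have finite measure; a null cell has modulus `0`, which
neutralises its factor `|Ω|^(-α) = ∞`. -/

open scoped fwdDiff
open Finset

theorem fwdDiff_iter_eq_fwdDiff_iter_line {R M G : Type*} [Semiring R] [AddCommMonoid M]
    [Module R M] [AddCommGroup G] (F : M → G) (x h : M) (r : ℕ) :
    (Δ_[h])^[r] F x = (Δ_[(1 : R)])^[r] (fun t => F (x + t • h)) 0 := by
  simp [fwdDiff_iter_eq_sum_shift, Nat.cast_smul_eq_nsmul]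

theorem fwdDiff_iter_eq_zero_of_eq_eval_on_line {R M : Type*} [CommRing R] [AddCommMonoid M]
    [Module R M] {F : M → R} {x h : M} {L : Polynomial R} {r : ℕ} (hL : L.natDegree < r)
    (hF : ∀ t : R, F (x + t • h) = L.eval t) : (Δ_[h])^[r] F x = 0 := by
  rw [fwdDiff_iter_eq_fwdDiff_iter_line (R := R), funext hF,
    Polynomial.fwdDiff_iter_eq_zero_of_degree_lt hL, Pi.zero_apply]

namespace MvPolynomial

variable {σ R : Type*}

theorem natDegree_aeval_le_totalDegree [CommSemiring R] {g : σ → Polynomial R}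
    (hg : ∀ i, (g i).natDegree ≤ 1) (P : MvPolynomial σ R) :
    (aeval g P).natDegree ≤ P.totalDegree := by
  conv_lhs => rw [P.as_sum, map_sum]
  refine Polynomial.natDegree_sum_le_of_forall_le _ _ fun d hd => ?_
  rw [aeval_monomial, Algebra.algebraMap_eq_smul_one, smul_mul_assoc, one_mul]
  refine (Polynomial.natDegree_smul_le _ _).trans <| (Polynomial.natDegree_prod_le _ _).trans ?_
  calc ∑ i ∈ d.support, (g i ^ d i).natDegree ≤ ∑ i ∈ d.support, d i :=
        Finset.sum_le_sum fun i _ =>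
          Polynomial.natDegree_pow_le.trans (by simpa using Nat.mul_le_mul_left (d i) (hg i))
    _ ≤ P.totalDegree := le_totalDegree hd

theorem eval_add_smul_eq_eval_aeval [CommSemiring R] (P : MvPolynomial σ R) (x h : σ → R)
    (t : R) :
    eval (x + t • h) P =
      (aeval (fun i => Polynomial.C (x i) + Polynomial.C (h i) * Polynomial.X) P).eval t := by
  rw [aeval_def, ← Polynomial.coe_evalRingHom, eval₂_comp_left, eval, coe_eval₂Hom]
  congr 1
  · ext; simp
  · funext i
    simp only [Function.comp_apply, Polynomial.coe_evalRingHom, Polynomial.eval_add,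
      Polynomial.eval_mul, Polynomial.eval_C, Polynomial.eval_X, Pi.add_apply, Pi.smul_apply,
      smul_eq_mul]
    ring

theorem fwdDiff_iter_eval_comp_eq_zero [CommRing R] {M : Type*} [AddCommGroup M] [Module R M]
    (φ : M →ₗ[R] σ → R) {P : MvPolynomial σ R} {r : ℕ} (hP : P.totalDegree < r)
    (h x : M) : (Δ_[h])^[r] (fun y => eval (φ y) P) x = 0 :=
  fwdDiff_iter_eq_zero_of_eq_eval_on_line
    ((natDegree_aeval_le_totalDegree
      (g := fun i => Polynomial.C (φ x i) + Polynomial.C (φ h i) * Polynomial.X)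
      (fun i => by compute_degree) P).trans_lt hP)
    fun t => by rw [map_add, map_smul]; exact eval_add_smul_eq_eval_aeval P (φ x) (φ h) t

end MvPolynomial

theorem add_natCast_smul_mem_segment {E : Type*} [AddCommGroup E] [Module ℝ E] (x h : E)
    {k r : ℕ} (hk : k ≤ r) : x + (k : ℝ) • h ∈ segment ℝ x (x + (r : ℝ) • h) := by
  rw [segment_eq_image']
  refine ⟨k / r, ⟨by positivity, div_le_one_of_le₀ (by exact_mod_cast hk) (by positivity)⟩,
    ?_⟩
  have hkr : (k : ℝ) / r * r = k := div_mul_cancel_of_imp fun hr => by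
    rw [Nat.cast_eq_zero] at hr ⊢; omega
  simp only [add_sub_cancel_left, smul_smul, hkr]

theorem rDiff_eq_zero_of_eq_on_shifts {n r : ℕ} {f g : EuclideanSpace ℝ (Fin n) → ℝ}
    {Ω : Set (EuclideanSpace ℝ (Fin n))} {h x : EuclideanSpace ℝ (Fin n)}
    (hfg : ∀ k ≤ r, x + (k : ℝ) • h ∈ Ω →
      f (x + (k : ℝ) • h) = g (x + (k : ℝ) • h))
    (hg : (Δ_[h])^[r] g x = 0) : rDiff r f Ω h x = 0 := by
  by_cases hx : segment ℝ x (x + (r : ℝ) • h) ⊆ Ω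
  · rw [rDiff, Set.indicator_of_mem hx, ← hg, fwdDiff_iter_eq_sum_shift]
    refine sum_congr rfl fun k hk => ?_
    have hkr : k ≤ r := mem_range_succ_iff.mp hk
    have hsign : (-1 : ℝ) ^ (r + k) = (-1) ^ (r - k) := by
      rw [show r + k = r - k + 2 * k by omega, pow_add, pow_mul, neg_one_sq, one_pow, mul_one]
    rw [hfg k hkr (hx (add_natCast_smul_mem_segment x h hkr)), zsmul_eq_mul,
      Nat.cast_smul_eq_nsmul, hsign]
    push_cast
    ring
  · exact Set.indicator_of_notMem hx _

theorem abs_rDiff_le {n r : ℕ} {f : EuclideanSpace ℝ (Fin n) → ℝ} {C : ℝ}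
    (hf : ∀ x, |f x| ≤ C) (Ω : Set (EuclideanSpace ℝ (Fin n)))
    (h x : EuclideanSpace ℝ (Fin n)) :
    |rDiff r f Ω h x| ≤ 2 ^ r * C := by
  have hC : 0 ≤ C := (abs_nonneg _).trans (hf 0)
  by_cases hx : segment ℝ x (x + (r : ℝ) • h) ⊆ Ω
  · rw [rDiff, Set.indicator_of_mem hx]
    calc
      |∑ k ∈ range (r + 1), (-1 : ℝ) ^ (r + k) * (r.choose k : ℝ) * f (x + (k : ℝ) • h)|
        ≤ ∑ k ∈ range (r + 1), (r.choose k : ℝ) * C := by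
          refine (abs_sum_le_sum_abs _ _).trans (sum_le_sum fun k _ => ?_)
          rw [abs_mul, abs_mul, abs_pow, abs_neg, abs_one, one_pow, one_mul, Nat.abs_cast]
          exact mul_le_mul_of_nonneg_left (hf _) (Nat.cast_nonneg _)
      _ = 2 ^ r * C := by rw [← sum_mul, ← Nat.cast_sum, Nat.sum_range_choose, Nat.cast_pow,
          Nat.cast_ofNat]
  · rw [rDiff, Set.indicator_of_notMem hx, abs_zero]
    positivity

theorem modulusR_le {n r : ℕ} {f : EuclideanSpace ℝ (Fin n) → ℝ} {C τ : ℝ} (hτ : 0 < τ)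
    (hf : ∀ x, |f x| ≤ C) (Ω : Set (EuclideanSpace ℝ (Fin n))) :
    modulusR r f Ω τ ≤ volume Ω ^ τ⁻¹ * ENNReal.ofReal (2 ^ r * C) := by
  refine iSup₂_le fun h _ => (eLpNorm_le_of_ae_bound (Filter.Eventually.of_forall fun x =>
    (Real.norm_eq_abs _).trans_le (abs_rDiff_le hf Ω h x))).trans_eq ?_
  rw [Measure.restrict_apply_univ, ENNReal.toReal_ofReal hτ.le]

theorem modulusR_eq_zero_of_volume_eq_zero {n r : ℕ} (f : EuclideanSpace ℝ (Fin n) → ℝ)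
    {Ω : Set (EuclideanSpace ℝ (Fin n))} (τ : ℝ) (hΩ : volume Ω = 0) :
    modulusR r f Ω τ = 0 :=
  nonpos_iff_eq_zero.mp <| iSup₂_le fun h _ => by
    rw [Measure.restrict_eq_zero.mpr hΩ, eLpNorm_measure_zero]

theorem modulusR_eq_zero_of_eq_off_null {n r : ℕ} {f g : EuclideanSpace ℝ (Fin n) → ℝ}
    {Ω N : Set (EuclideanSpace ℝ (Fin n))} (τ : ℝ) (hN : volume N = 0)
    (hfg : ∀ z ∈ Ω, z ∉ N → f z = g z) (hg : ∀ h x, (Δ_[h])^[r] g x = 0) :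
    modulusR r f Ω τ = 0 := by
  refine nonpos_iff_eq_zero.mp (iSup₂_le fun h _ => ?_)
  have hshifts : ∀ᵐ x, ∀ k : ℕ, x + (k : ℝ) • h ∉ N := ae_all_iff.2 fun k =>
    measure_eq_zero_iff_ae_notMem.1 ((measure_preimage_add_right _ ((k : ℝ) • h) N).trans hN)
  have hzero : ∀ᵐ x ∂volume.restrict Ω, rDiff r f Ω h x = 0 :=
    ae_restrict_of_ae <| hshifts.mono fun x hx =>
      rDiff_eq_zero_of_eq_on_shifts (fun k _ hk => hfg _ hk (hx k)) (hg h x)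
  rw [eLpNorm_congr_ae hzero, eLpNorm_zero']

theorem isCompact_euclideanSpace_box {ι : Type*} (a b : ι → ℝ) :
    IsCompact {x : EuclideanSpace ℝ ι | ∀ i, x i ∈ Set.Icc (a i) (b i)} := by
  have hbox : {x : EuclideanSpace ℝ ι | ∀ i, x i ∈ Set.Icc (a i) (b i)} =
      EuclideanSpace.equiv ι ℝ ⁻¹' Set.univ.pi fun i => Set.Icc (a i) (b i) := by
    ext x
    simp only [Set.mem_preimage, Set.mem_univ_pi]
    rfl
  rw [hbox]
  exact (EuclideanSpace.equiv ι ℝ).toHomeomorph.isCompact_preimage.2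
    (isCompact_univ_pi fun i => isCompact_Icc)

theorem volume_euclideanSpace_hyperplane {ι : Type*} [Fintype ι] (i : ι) (t : ℝ) :
    volume {x : EuclideanSpace ℝ ι | x i = t} = 0 :=
  ((PiLp.volume_preserving_ofLp ι).measure_preimage
    (measurableSet_eq_fun (measurable_pi_apply i) measurable_const).nullMeasurableSet).trans
    (by rw [volume_pi]; exact Measure.pi_hyperplane (fun _ : ι => (volume : Measure ℝ)) i t)

theorem exists_forall_abs_sum_indicator_le {X κ : Type*} [TopologicalSpace X] [Fintype κ]
    {s : κ → Set X} (hs : ∀ k, IsCompact (s k)) {g : κ → X → ℝ}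
    (hg : ∀ k, ContinuousOn (g k) (s k)) :
    ∃ C, ∀ x, |∑ k, (s k).indicator (g k) x| ≤ C := by
  choose C hC using fun k => (hs k).exists_bound_of_continuousOn (hg k)
  refine ⟨∑ k, |C k|, fun x => (abs_sum_le_sum_abs _ _).trans (sum_le_sum fun k _ => ?_)⟩
  by_cases hx : x ∈ s k
  · rw [Set.indicator_of_mem hx, ← Real.norm_eq_abs]
    exact (hC k x hx).trans (le_abs_self _)
  · rw [Set.indicator_of_notMem hx, abs_zero]
    exact abs_nonneg _

def OneSided {ι : Type*} (S : Set (EuclideanSpace ℝ ι)) (i : ι) (t : ℝ) : Prop :=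
  S ⊆ {x | x i ≤ t} ∨ S ⊆ {x | t < x i}

theorem subset_box_of_oneSided {ι : Type*} {S : Set (EuclideanSpace ℝ ι)} {lo hi : ι → ℝ}
    (hlo : ∀ i, OneSided S i (lo i)) (hhi : ∀ i, OneSided S i (hi i))
    {x : EuclideanSpace ℝ ι} (hxS : x ∈ S) (hxB : ∀ i, x i ∈ Set.Icc (lo i) (hi i))
    (hx : ∀ i, x i ≠ lo i) :
    S ⊆ {y | ∀ i, y i ∈ Set.Icc (lo i) (hi i)} := by
  intro y hy i
  constructor
  · rcases hlo i with h | h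
    · exact absurd (le_antisymm (h hxS) (hxB i).1) (hx i)
    · exact (h hy).le
  · rcases hhi i with h | h
    · exact h hy
    · exact absurd (h hxS) (hxB i).2.not_gt

theorem modulusR_piecewise_eq_zero_of_oneSided {n r K : ℕ} (hr : 1 ≤ r) (τ : ℝ)
    {lo hi : Fin K → Fin n → ℝ} {B : Fin K → Set (EuclideanSpace ℝ (Fin n))}
    (hB : ∀ k, B k = {x | ∀ i, x i ∈ Set.Icc (lo k i) (hi k i)})
    {P : Fin K → MvPolynomial (Fin n) ℝ} (hP : ∀ k, (P k).totalDegree ≤ r - 1)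
    {f : EuclideanSpace ℝ (Fin n) → ℝ}
    (hf : ∀ x, f x = ∑ k, (B k).indicator (fun y => MvPolynomial.eval (fun i => y i) (P k)) x)
    {S : Set (EuclideanSpace ℝ (Fin n))} (hlo : ∀ k i, OneSided S i (lo k i))
    (hhi : ∀ k i, OneSided S i (hi k i)) : modulusR r f S τ = 0 := by
  classical
  set Q := ∑ k ∈ univ.filter (fun k => S ⊆ B k), P k
  have hQ : Q.totalDegree < r :=
    (MvPolynomial.totalDegree_finsetSum_le fun k _ => hP k).trans_lt (by omega)
  refine modulusR_eq_zero_of_eq_off_null (N := ⋃ k, ⋃ i, {x | x i = lo k i})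
    (g := fun z => MvPolynomial.eval (WithLp.linearEquiv 2 ℝ (Fin n → ℝ) z) Q) τ
    (measure_iUnion_null fun k => measure_iUnion_null fun i =>
      volume_euclideanSpace_hyperplane i _) (fun z hzS hzN => ?_)
    (fun h x => MvPolynomial.fwdDiff_iter_eval_comp_eq_zero _ hQ h x)
  simp only [Set.mem_iUnion, not_exists] at hzN
  rw [hf, map_sum, sum_filter]
  refine sum_congr rfl fun k _ => ?_
  by_cases hzB : z ∈ B k
  · rw [hB] at hzB ⊢
    rw [Set.indicator_of_mem hzB,
      if_pos (subset_box_of_oneSided (hlo k) (hhi k) hzS hzB (hzN k))]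
    rfl
  · rw [Set.indicator_of_notMem hzB, if_neg fun hS => hzB (hS hzS)]

def treeCells {ι : Type*} (Ω₀ : Set (EuclideanSpace ℝ ι)) (c : ℕ → ι × ℝ) :
    ℕ → ℕ → Set (EuclideanSpace ℝ ι)
  | 0, j => if j = 0 then Ω₀ else ∅
  | l + 1, j =>
    if j % 2 = 0 then treeCells Ω₀ c l (j / 2) ∩ {x | x (c l).1 ≤ (c l).2}
    else treeCells Ω₀ c l (j / 2) ∩ {x | (c l).2 < x (c l).1}

namespace treeCells

variable {ι : Type*} {Ω₀ : Set (EuclideanSpace ℝ ι)} {c : ℕ → ι × ℝ}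

theorem zero_zero : treeCells Ω₀ c 0 0 = Ω₀ := rfl

theorem zero_of_ne_zero {j : ℕ} (hj : j ≠ 0) : treeCells Ω₀ c 0 j = ∅ := if_neg hj

theorem succ_two_mul (l j : ℕ) :
    treeCells Ω₀ c (l + 1) (2 * j) = treeCells Ω₀ c l j ∩ {x | x (c l).1 ≤ (c l).2} := by
  simp [treeCells]

theorem succ_two_mul_add_one (l j : ℕ) :
    treeCells Ω₀ c (l + 1) (2 * j + 1) =
      treeCells Ω₀ c l j ∩ {x | (c l).2 < x (c l).1} := by
  simp [treeCells, Nat.add_mod, Nat.add_div]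

theorem union_children (l j : ℕ) :
    treeCells Ω₀ c (l + 1) (2 * j) ∪ treeCells Ω₀ c (l + 1) (2 * j + 1) =
      treeCells Ω₀ c l j := by
  rw [succ_two_mul, succ_two_mul_add_one, ← Set.inter_union_distrib_left]
  convert Set.inter_univ _
  ext x
  simp [le_or_gt]

theorem disjoint_children (l j : ℕ) :
    Disjoint (treeCells Ω₀ c (l + 1) (2 * j)) (treeCells Ω₀ c (l + 1) (2 * j + 1)) := by
  rw [succ_two_mul, succ_two_mul_add_one]
  exact Set.disjoint_left.mpr fun x ⟨_, (hle : x (c l).1 ≤ _)⟩ ⟨_, hlt⟩ => hle.not_gt hlt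

theorem succ_subset (l j : ℕ) : treeCells Ω₀ c (l + 1) j ⊆ treeCells Ω₀ c l (j / 2) := by
  rw [treeCells]
  split <;> exact Set.inter_subset_left

theorem subset_root (l j : ℕ) : treeCells Ω₀ c l j ⊆ Ω₀ := by
  induction l generalizing j with
  | zero => rw [treeCells]; split <;> simp
  | succ l ih => exact (succ_subset l j).trans (ih _)

theorem eq_empty_of_le (l j : ℕ) (h : 2 ^ l ≤ j) : treeCells Ω₀ c l j = ∅ := by
  induction l generalizing j with
  | zero => exact zero_of_ne_zero (by omega)
  | succ l ih =>
    exact Set.subset_empty_iff.mp <| (succ_subset l j).trans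
      (ih _ (by rw [Nat.le_div_iff_mul_le two_pos]; rwa [pow_succ] at h)).subset

theorem oneSided_of_lt {l m : ℕ} (hm : m < l) (j : ℕ) :
    OneSided (treeCells Ω₀ c l j) (c m).1 (c m).2 := by
  induction l generalizing j with
  | zero => omega
  | succ l ih =>
    rcases Nat.lt_succ_iff_lt_or_eq.mp hm with hm | rfl
    · exact (ih hm (j / 2)).imp (succ_subset l j).trans (succ_subset l j).trans
    · rw [treeCells]
      split
      exacts [Or.inl Set.inter_subset_right, Or.inr Set.inter_subset_right]

theorem oneSided_of_mem {L : List (ι × ℝ)} {d : ι × ℝ} {l : ℕ} (hl : L.length ≤ l)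
    {i : ι} {t : ℝ} (hit : (i, t) ∈ L) (j : ℕ) :
    OneSided (treeCells Ω₀ (fun m => L.getD m d) l j) i t := by
  obtain ⟨m, hm, hmit⟩ := List.mem_iff_getElem.mp hit
  have hcm : L.getD m d = (i, t) := by rw [List.getD_eq_getElem _ _ hm, hmit]
  simpa only [hcm] using
    oneSided_of_lt (Ω₀ := Ω₀) (c := fun m => L.getD m d) (hm.trans_le hl) j

end treeCells

theorem besovTreeSeminormTau_lt_top {n r : ℕ} {α τ C : ℝ}
    {f : EuclideanSpace ℝ (Fin n) → ℝ} {cells : ℕ → ℕ → Set (EuclideanSpace ℝ (Fin n))}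
    (L : ℕ) (hτ : 0 < τ) (hf : ∀ x, |f x| ≤ C)
    (hvol : ∀ l j, volume (cells l j) ≠ ⊤) (hempty : ∀ l j, 2 ^ l ≤ j → cells l j = ∅)
    (hdeep : ∀ l, L ≤ l → ∀ j, modulusR r f (cells l j) τ = 0) :
    besovTreeSeminormTau r α τ f cells < ⊤ := by
  set u := fun l j => (volume (cells l j) ^ (-α) * modulusR r f (cells l j) τ) ^ τ
  have hu_zero : ∀ l j, modulusR r f (cells l j) τ = 0 → u l j = 0 := fun l j h => by
    simp only [u, h, mul_zero, ENNReal.zero_rpow_of_pos hτ]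
  have hu_fin : ∀ l j, u l j < ⊤ := fun l j => by
    by_cases hv : volume (cells l j) = 0
    · rw [hu_zero l j (modulusR_eq_zero_of_volume_eq_zero f τ hv)]
      exact ENNReal.zero_lt_top
    refine ENNReal.rpow_lt_top_of_nonneg hτ.le (ENNReal.mul_ne_top ?_ ?_)
    · rw [ENNReal.rpow_neg, ENNReal.inv_ne_top]
      exact (ENNReal.rpow_pos (pos_iff_ne_zero.2 hv) (hvol l j)).ne'
    · refine ((modulusR_le hτ hf _).trans_lt (ENNReal.mul_lt_top ?_ ENNReal.ofReal_lt_top)).ne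
      exact ENNReal.rpow_lt_top_of_nonneg (inv_nonneg.2 hτ.le) (hvol l j)
  have hrow : ∀ l, ∑' j, u l j = ∑ j ∈ range (2 ^ l), u l j := fun l =>
    tsum_eq_sum fun j hj => hu_zero l j <| by
      rw [hempty l j (by simpa using hj)]
      exact modulusR_eq_zero_of_volume_eq_zero f τ measure_empty
  rw [besovTreeSeminormTau, tsum_eq_sum (s := range L) fun l hl =>
    ENNReal.tsum_eq_zero.2 fun j => hu_zero l j (hdeep l (by simpa using hl) j)]
  exact ENNReal.sum_lt_top.2 fun l _ =>
    (hrow l).trans_lt (ENNReal.sum_lt_top.2 fun j _ => hu_fin l j)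

def faceCuts {n K : ℕ} (lo hi : Fin K → Fin n → ℝ) : List (Fin n × ℝ) :=
  (List.finRange K).flatMap fun k => (List.finRange n).flatMap fun i => [(i, lo k i), (i, hi k i)]

theorem mem_faceCuts {n K : ℕ} (lo hi : Fin K → Fin n → ℝ) (k : Fin K) (i : Fin n) :
    (i, lo k i) ∈ faceCuts lo hi ∧ (i, hi k i) ∈ faceCuts lo hi := by
  constructor <;> exact List.mem_flatMap.2 ⟨k, List.mem_finRange k,
    List.mem_flatMap.2 ⟨i, List.mem_finRange i, by simp⟩⟩

theorem stmt_0 {n : ℕ} (hn : 0 < n) (r : ℕ) (hr : 1 ≤ r) (p : ℝ) (hp : 0 < p)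
    (a b : Fin n → ℝ)
    (Ω₀ : Set (EuclideanSpace ℝ (Fin n)))
    (hΩ₀ : Ω₀ = {x | ∀ i, x i ∈ Set.Icc (a i) (b i)})
    (K : ℕ) (lo hi : Fin K → Fin n → ℝ)
    (B : Fin K → Set (EuclideanSpace ℝ (Fin n)))
    (hB : ∀ k, B k = {x | ∀ i, x i ∈ Set.Icc (lo k i) (hi k i)})
    (P : Fin K → MvPolynomial (Fin n) ℝ) (hP : ∀ k, (P k).totalDegree ≤ r - 1)
    (f : EuclideanSpace ℝ (Fin n) → ℝ)
    (hf : ∀ x, f x = ∑ k, (B k).indicator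
        (fun y => MvPolynomial.eval (fun i => y i) (P k)) x) :
    ∃ cells : ℕ → ℕ → Set (EuclideanSpace ℝ (Fin n)),
      cells 0 0 = Ω₀ ∧ (∀ j, j ≠ 0 → cells 0 j = ∅) ∧
      (∀ l j, cells (l + 1) (2 * j) ∪ cells (l + 1) (2 * j + 1) = cells l j) ∧
      (∀ l j, Disjoint (cells (l + 1) (2 * j)) (cells (l + 1) (2 * j + 1))) ∧
      (∀ l j, ∃ (i : Fin n) (t : ℝ),
        cells (l + 1) (2 * j) = cells l j ∩ {x | x i ≤ t} ∧
        cells (l + 1) (2 * j + 1) = cells l j ∩ {x | t < x i}) ∧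
      (∀ α : ℝ, 0 < α → besovTreeSeminormTau r α (α + 1 / p)⁻¹ f cells < ⊤) := by
  set cuts := faceCuts lo hi
  refine ⟨treeCells Ω₀ fun m => cuts.getD m (⟨0, hn⟩, 0), treeCells.zero_zero,
    fun j => treeCells.zero_of_ne_zero, treeCells.union_children, treeCells.disjoint_children,
    fun l j => ⟨_, _, treeCells.succ_two_mul l j, treeCells.succ_two_mul_add_one l j⟩,
    fun α hα => ?_⟩
  obtain ⟨C, hC⟩ := exists_forall_abs_sum_indicator_le
    (fun k => hB k ▸ isCompact_euclideanSpace_box (lo k) (hi k))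
    fun k => ((MvPolynomial.continuous_eval (P k)).comp (PiLp.continuous_ofLp 2 _)).continuousOn
  have hvol : volume Ω₀ ≠ ⊤ := hΩ₀ ▸ (isCompact_euclideanSpace_box a b).measure_ne_top
  exact besovTreeSeminormTau_lt_top cuts.length (by positivity) (fun x => hf x ▸ hC x)
    (fun l j => ne_top_of_le_ne_top hvol (measure_mono (treeCells.subset_root l j)))
    treeCells.eq_empty_of_le fun l hl j => modulusR_piecewise_eq_zero_of_oneSided hr _ hB hP hf
      (fun k i => treeCells.oneSided_of_mem hl (mem_faceCuts lo hi k i).1 j)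
      (fun k i => treeCells.oneSided_of_mem hl (mem_faceCuts lo hi k i).2 j)
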